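/- The double logarithm cycle Z_{x1,x2} = [1 - 1/t, 1 - t/x1, 1 - t/x2] (parametrized by t ∈ P¹) in the algebraic 3-cube has boundary ∂Z_{x1,x2} = [1 - 1/x1, 1 - 1/x2] - [1 - 1/x1, 1 - x1/x2] + [1 - 1/x2, 1 - x2/x1], provided x1, x2 are distinct elements of F \ {0, 1}. -/
import Mathlib


/-- A point of `P¹(F)`, modeled as `Option F` with `none` the point `∞`. -/
abbrev P1 (F : Type) := Option F

/-- A point of `(P¹)³` lies in the algebraic cube `□³ = (P¹ \ {1})³` iff none of its
coordinates equals `1`. -/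
def inCube3 {F : Type} [Field F] (p : P1 F × P1 F × P1 F) : Prop :=
  p.1 ≠ some 1 ∧ p.2.1 ≠ some 1 ∧ p.2.2 ≠ some 1

/-- The parametrization `t ↦ (1 - 1/t, 1 - t/x₁, 1 - t/x₂)` of the double logarithm
cycle `Z_{x₁,x₂}`, with the values at `t = ∞` and `t = 0` given by the evident limits
`(1, ∞, ∞)` and `(∞, 1, 1)`. -/
def dilogCycle {F : Type} [Field F] [DecidableEq F] (x1 x2 : F) :
    P1 F → P1 F × P1 F × P1 F
  | none => (some 1, none, none)
  | some t => if t = 0 then (none, some 1, some 1)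
      else (some (1 - 1 / t), some (1 - t / x1), some (1 - t / x2))

/-- For distinct `x₁, x₂ ∈ F \ {0, 1}`, the double logarithm cycle
`Z_{x₁,x₂} = [1 - 1/t, 1 - t/x₁, 1 - t/x₂]` in the algebraic 3-cube has boundary
`∂Z_{x₁,x₂} = [1-1/x₁, 1-1/x₂] - [1-1/x₁, 1-x₁/x₂] + [1-1/x₂, 1-x₂/x₁]`:
the intersection of the curve with the face `z₁ = 0` inside the cube is exactly the
point at `t = 1`, where `(z₂, z₃) = (1-1/x₁, 1-1/x₂)`; with `z₂ = 0` exactly the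
point at `t = x₁`, where `(z₁, z₃) = (1-1/x₁, 1-x₁/x₂)` (entering with sign `-`);
with `z₃ = 0` exactly the point at `t = x₂`, where `(z₁, z₂) = (1-1/x₂, 1-x₂/x₁)`;
and all intersections with the faces `zᵢ = ∞` inside the cube are empty. -/
theorem double_logarithm_cycle_boundary (F : Type) [Field F] [DecidableEq F]
    (x1 x2 : F) (h10 : x1 ≠ 0) (h11 : x1 ≠ 1) (h20 : x2 ≠ 0) (h21 : x2 ≠ 1)
    (h12 : x1 ≠ x2) :
    (∀ t : P1 F, ((dilogCycle x1 x2 t).1 = some 0 ∧ inCube3 (dilogCycle x1 x2 t))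
        ↔ t = some 1) ∧
    (dilogCycle x1 x2 (some 1)).2.1 = some (1 - 1 / x1) ∧
    (dilogCycle x1 x2 (some 1)).2.2 = some (1 - 1 / x2) ∧
    (∀ t : P1 F, ((dilogCycle x1 x2 t).2.1 = some 0 ∧ inCube3 (dilogCycle x1 x2 t))
        ↔ t = some x1) ∧
    (dilogCycle x1 x2 (some x1)).1 = some (1 - 1 / x1) ∧
    (dilogCycle x1 x2 (some x1)).2.2 = some (1 - x1 / x2) ∧
    (∀ t : P1 F, ((dilogCycle x1 x2 t).2.2 = some 0 ∧ inCube3 (dilogCycle x1 x2 t))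
        ↔ t = some x2) ∧
    (dilogCycle x1 x2 (some x2)).1 = some (1 - 1 / x2) ∧
    (dilogCycle x1 x2 (some x2)).2.1 = some (1 - x2 / x1) ∧
    (∀ t : P1 F, ¬ ((dilogCycle x1 x2 t).1 = none ∧ inCube3 (dilogCycle x1 x2 t))) ∧
    (∀ t : P1 F, ¬ ((dilogCycle x1 x2 t).2.1 = none ∧ inCube3 (dilogCycle x1 x2 t))) ∧
    (∀ t : P1 F, ¬ ((dilogCycle x1 x2 t).2.2 = none ∧ inCube3 (dilogCycle x1 x2 t))) := by

  have key : ∀ t : F, t ≠ 0 → inCube3 (dilogCycle x1 x2 (some t)) := by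
    intro t ht
    simp only [dilogCycle, if_neg ht, inCube3, ne_eq, Option.some.injEq]
    refine ⟨?_, ?_, ?_⟩ <;> rw [sub_eq_self] <;> simp [ht, h10, h20]
  have hz : ∀ t x : F, x ≠ 0 → ((1 : F) - t / x = 0 ↔ t = x) := by
    intro t x hx
    rw [sub_eq_zero, eq_comm, div_eq_one_iff_eq hx]
  have hz1 : ∀ t : F, t ≠ 0 → ((1 : F) - 1 / t = 0 ↔ t = 1) := by
    intro t ht
    rw [sub_eq_zero, eq_comm, div_eq_one_iff_eq ht, eq_comm]
  refine ⟨?_, ?_, ?_, ?_, ?_, ?_, ?_, ?_, ?_, ?_, ?_, ?_⟩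
  · rintro (_ | t)
    · simp [dilogCycle, inCube3]
    · by_cases ht : t = 0
      · subst ht; simp [dilogCycle, inCube3]
      · simp only [dilogCycle, if_neg ht, Option.some.injEq]
        constructor
        · rintro ⟨h, -⟩; exact (hz1 t ht).mp h
        · rintro rfl
          exact ⟨(hz1 _ ht).mpr rfl, by simpa [dilogCycle, ht] using key _ ht⟩
  · simp [dilogCycle]
  · simp [dilogCycle]
  · rintro (_ | t)
    · simp [dilogCycle, inCube3]
    · by_cases ht : t = 0
      · subst ht; simp [dilogCycle, inCube3, Ne.symm h10]
      · simp only [dilogCycle, if_neg ht, Option.some.injEq]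
        constructor
        · rintro ⟨h, -⟩; exact (hz t x1 h10).mp h
        · rintro rfl
          exact ⟨(hz _ _ h10).mpr rfl, by simpa [dilogCycle, ht] using key _ ht⟩
  · simp [dilogCycle, h10]
  · simp [dilogCycle, h10]
  · rintro (_ | t)
    · simp [dilogCycle, inCube3]
    · by_cases ht : t = 0
      · subst ht; simp [dilogCycle, inCube3, Ne.symm h20]
      · simp only [dilogCycle, if_neg ht, Option.some.injEq]
        constructor
        · rintro ⟨h, -⟩; exact (hz t x2 h20).mp h
        · rintro rfl
          exact ⟨(hz _ _ h20).mpr rfl, by simpa [dilogCycle, ht] using key _ ht⟩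
  · simp [dilogCycle, h20]
  · simp [dilogCycle, h20]
  · rintro (_ | t)
    · simp [dilogCycle, inCube3]
    · by_cases ht : t = 0
      · subst ht; simp [dilogCycle, inCube3]
      · simp [dilogCycle, if_neg ht]
  · rintro (_ | t)
    · simp [dilogCycle, inCube3]
    · by_cases ht : t = 0
      · subst ht; simp [dilogCycle, inCube3]
      · simp [dilogCycle, if_neg ht]
  · rintro (_ | t)
    · simp [dilogCycle, inCube3]
    · by_cases ht : t = 0
      · subst ht; simp [dilogCycle, inCube3]
      · simp [dilogCycle, if_neg ht]
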